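/- Let p : (0,1) → (0,1] be a nondecreasing function such that: (i) p(ε ε') ≤ p(ε) p(ε') for all ε, ε' ∈ (0,1); (ii) there exists a constant C > 0 with p(8 ε ε') ≥ C p(ε) p(ε') for all ε, ε' ∈ (0,1/4); and (iii) p(ε₀) < 1 for some ε₀ ∈ (0,1). Then there exist a real number β ∈ (0, ∞) and a constant C' > 0 such that ε^β ≤ p(ε) ≤ C' ε^β for all ε ∈ (0, 1/8). -/
import Mathlib

set_option maxHeartbeats 1000000

private lemma arch_aux8 {a b c : ℝ}
    (h : ∀ j : ℕ, 1 ≤ j → (j : ℝ) * a ≤ (j : ℝ) * b + c) : a ≤ b := by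
  by_contra hab
  push_neg at hab
  have hd : 0 < a - b := sub_pos.mpr hab
  obtain ⟨j, hj⟩ := exists_nat_gt (c / (a - b))
  have hj' := h (j + 1) (Nat.le_add_left 1 j)
  have h1 : c / (a - b) < ((j : ℝ) + 1) := by
    have : (0:ℝ) ≤ j := Nat.cast_nonneg j
    linarith
  have h2 : c < ((j : ℝ) + 1) * (a - b) := (div_lt_iff₀ hd).mp h1
  push_cast at hj'
  nlinarith

/-- Fekete-type lemma for the one-arm probability: if `p : (0,1) → (0,1]` is
nondecreasing, submultiplicative (`p(εε') ≤ p(ε)p(ε')`), supermultiplicative up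
to a constant (`p(8εε') ≥ C p(ε) p(ε')` for `ε, ε' ∈ (0,1/4)`), and `p(ε₀) < 1`
for some `ε₀`, then there are `β ∈ (0,∞)` and `C' > 0` with
`ε^β ≤ p(ε) ≤ C' ε^β` for all `ε ∈ (0,1/8)`. -/
theorem stmt8 (p : ℝ → ℝ)
    (hrange : ∀ ε ∈ Set.Ioo (0 : ℝ) 1, p ε ∈ Set.Ioc (0 : ℝ) 1)
    (hmono : ∀ ε ∈ Set.Ioo (0 : ℝ) 1, ∀ ε' ∈ Set.Ioo (0 : ℝ) 1,
      ε ≤ ε' → p ε ≤ p ε')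
    (hsub : ∀ ε ∈ Set.Ioo (0 : ℝ) 1, ∀ ε' ∈ Set.Ioo (0 : ℝ) 1,
      p (ε * ε') ≤ p ε * p ε')
    (hsup : ∃ C : ℝ, 0 < C ∧ ∀ ε ∈ Set.Ioo (0 : ℝ) (1/4), ∀ ε' ∈ Set.Ioo (0 : ℝ) (1/4),
      C * (p ε * p ε') ≤ p (8 * ε * ε'))
    (hlt : ∃ ε₀ ∈ Set.Ioo (0 : ℝ) 1, p ε₀ < 1) :
    ∃ β : ℝ, 0 < β ∧ ∃ C' : ℝ, 0 < C' ∧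
      ∀ ε ∈ Set.Ioo (0 : ℝ) (1/8), ε ^ β ≤ p ε ∧ p ε ≤ C' * ε ^ β := by
  classical
  obtain ⟨C, hCpos, hsupC⟩ := hsup
  obtain ⟨ε₀, hε₀, hpε₀⟩ := hlt
  set C₁ : ℝ := min C 1 with hC₁def
  have hC₁pos : 0 < C₁ := lt_min hCpos one_pos
  have hC₁le : C₁ ≤ 1 := min_le_right _ _
  set A : ℝ := -Real.log C₁ with hAdef
  have hA : 0 ≤ A := by
    have := Real.log_nonpos hC₁pos.le hC₁le
    simp only [hAdef]; linarith
  set e : ℕ → ℝ := fun n => (1 / 2 : ℝ) ^ n with hedef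
  have he_pos : ∀ n, 0 < e n := fun n => by simp only [hedef]; positivity
  have he_lt1 : ∀ n, 1 ≤ n → e n < 1 := fun n hn => by
    simp only [hedef]
    exact pow_lt_one₀ (by norm_num) (by norm_num) (by omega)
  have he_mem : ∀ n, 1 ≤ n → e n ∈ Set.Ioo (0:ℝ) 1 := fun n hn => ⟨he_pos n, he_lt1 n hn⟩
  have he_anti : ∀ m n, m ≤ n → e n ≤ e m := fun m n h => by
    simp only [hedef]
    exact pow_le_pow_of_le_one (by norm_num) (by norm_num) h
  have hemul : ∀ m n, e m * e n = e (m+n) := fun m n => by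
    simp only [hedef]; rw [pow_add]
  set f : ℕ → ℝ := fun n => -Real.log (p (e n)) with hfdef
  have hppos : ∀ n, 1 ≤ n → 0 < p (e n) := fun n hn => (hrange _ (he_mem n hn)).1
  have hple : ∀ n, 1 ≤ n → p (e n) ≤ 1 := fun n hn => (hrange _ (he_mem n hn)).2
  have hf0 : ∀ n, 1 ≤ n → 0 ≤ f n := fun n hn => by
    have := Real.log_nonpos (hppos n hn).le (hple n hn)
    simp only [hfdef]; linarith
  have hfmono : ∀ m n, 1 ≤ m → m ≤ n → f m ≤ f n := by
    intro m n hm h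
    have h1 : p (e n) ≤ p (e m) :=
      hmono _ (he_mem n (le_trans hm h)) _ (he_mem m hm) (he_anti m n h)
    have h2 : Real.log (p (e n)) ≤ Real.log (p (e m)) :=
      (Real.log_le_log_iff (hppos n (le_trans hm h)) (hppos m hm)).mpr h1
    simp only [hfdef]; linarith
  -- superadditivity
  have hsuper : ∀ m n, 1 ≤ m → 1 ≤ n → f m + f n ≤ f (m + n) := by
    intro m n hm hn
    have h1 : p (e (m+n)) ≤ p (e m) * p (e n) := by
      rw [← hemul]; exact hsub _ (he_mem m hm) _ (he_mem n hn)
    have h2 : Real.log (p (e (m+n))) ≤ Real.log (p (e m) * p (e n)) :=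
      (Real.log_le_log_iff (hppos _ (by omega)) (by
        exact mul_pos (hppos m hm) (hppos n hn))).mpr h1
    rw [Real.log_mul (hppos m hm).ne' (hppos n hn).ne'] at h2
    simp only [hfdef]; linarith
  -- approximate subadditivity
  have h8 : ∀ m n : ℕ, 8 * e (m+3) * e (n+3) = e (m+n+3) := by
    intro m n
    simp only [hedef, pow_add]
    norm_num
    ring
  have he4 : ∀ m, 1 ≤ m → e (m+3) ∈ Set.Ioo (0:ℝ) (1/4) := by
    intro m hm
    refine ⟨he_pos _, ?_⟩
    have h1 : e (m+3) ≤ e 4 := he_anti 4 (m+3) (by omega)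
    have h2 : e 4 < 1/4 := by simp only [hedef]; norm_num
    exact lt_of_le_of_lt h1 h2
  have hsubadd : ∀ m n, 1 ≤ m → 1 ≤ n → f (m+n+3) ≤ f (m+3) + f (n+3) + A := by
    intro m n hm hn
    have hpm := hppos (m+3) (by omega)
    have hpn := hppos (n+3) (by omega)
    have hpmn := hppos (m+n+3) (by omega)
    have h1 : C₁ * (p (e (m+3)) * p (e (n+3))) ≤ p (e (m+n+3)) := by
      rw [← h8 m n]
      calc C₁ * (p (e (m+3)) * p (e (n+3)))
          ≤ C * (p (e (m+3)) * p (e (n+3))) := by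
            apply mul_le_mul_of_nonneg_right (min_le_left _ _)
            exact mul_nonneg hpm.le hpn.le
        _ ≤ p (8 * e (m+3) * e (n+3)) := hsupC _ (he4 m hm) _ (he4 n hn)
    have h2 : Real.log (C₁ * (p (e (m+3)) * p (e (n+3)))) ≤ Real.log (p (e (m+n+3))) :=
      (Real.log_le_log_iff (by exact mul_pos hC₁pos (mul_pos hpm hpn)) hpmn).mpr h1
    rw [Real.log_mul hC₁pos.ne' (mul_pos hpm hpn).ne',
      Real.log_mul hpm.ne' hpn.ne'] at h2
    simp only [hfdef, hAdef]; linarith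
  -- iterated subadditivity
  have hgK : ∀ n, 1 ≤ n → ∀ k, 1 ≤ k → f (k*n+3) ≤ (k:ℝ) * (f (n+3) + A) - A := by
    intro n hn k hk
    induction k, hk using Nat.le_induction with
    | base => simp
    | succ k hk ih =>
      have hkn : 1 ≤ k * n := Nat.one_le_iff_ne_zero.mpr (by positivity)
      have h1 := hsubadd (k*n) n hkn hn
      have h2 : (k+1)*n+3 = k*n + n + 3 := by ring
      rw [h2]
      push_cast
      linarith
  -- linear upper bound on f
  set K : ℝ := f 4 + A with hKdef
  have hK0 : 0 ≤ K := add_nonneg (hf0 4 (by omega)) hA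
  have hfK : ∀ n : ℕ, 1 ≤ n → f n ≤ (n:ℝ) * K := by
    intro n hn
    rcases le_or_gt n 3 with h3 | h3
    · have h1 : f n ≤ f 4 := hfmono n 4 hn (by omega)
      have h2 : (1:ℝ) ≤ (n:ℝ) := by exact_mod_cast hn
      nlinarith
    · have h4 : 4 ≤ n := h3
      have h1 := hgK 1 (le_refl 1) (n-3) (by omega)
      rw [show (n-3)*1 + 3 = n from by omega] at h1
      have hc : ((n-3:ℕ):ℝ) = (n:ℝ) - 3 := by
        push_cast [Nat.cast_sub (show 3 ≤ n by omega)]; ring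
      rw [hc] at h1
      have h2 : (4:ℝ) ≤ (n:ℝ) := by exact_mod_cast h4
      simp only [hKdef] at *
      nlinarith
  -- the exponent
  set S : Set ℝ := {x | ∃ n : ℕ, 1 ≤ n ∧ x = f n / n} with hSdef
  have hSne : S.Nonempty := ⟨f 1 / 1, 1, le_refl 1, by norm_num⟩
  have hSbdd : BddAbove S := by
    refine ⟨K, ?_⟩
    rintro x ⟨n, hn, rfl⟩
    have hn' : (0:ℝ) < (n:ℝ) := by exact_mod_cast Nat.lt_of_lt_of_le Nat.zero_lt_one hn
    rw [div_le_iff₀ hn']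
    have := hfK n hn
    linarith [mul_comm (n:ℝ) K]
  set L : ℝ := sSup S with hLdef
  have hmemL : ∀ n : ℕ, 1 ≤ n → f n / n ≤ L := fun n hn => le_csSup hSbdd ⟨n, hn, rfl⟩
  have hfLn : ∀ n : ℕ, 1 ≤ n → f n ≤ L * n := by
    intro n hn
    have hn' : (0:ℝ) < (n:ℝ) := by exact_mod_cast Nat.lt_of_lt_of_le Nat.zero_lt_one hn
    have h1 := hmemL n hn
    rw [div_le_iff₀ hn'] at h1
    linarith
  have hLpos : 0 < L := by
    obtain ⟨n₀, hn₀⟩ := exists_pow_lt_of_lt_one hε₀.1 (by norm_num : (1/2:ℝ) < 1)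
    have hm1 : 1 ≤ n₀ + 1 := by omega
    have hem : e (n₀+1) ≤ ε₀ := by
      have h1 : e (n₀+1) ≤ e n₀ := he_anti n₀ (n₀+1) (by omega)
      have h2 : e n₀ < ε₀ := by simp only [hedef]; exact hn₀
      linarith
    have h1 : p (e (n₀+1)) ≤ p ε₀ := hmono _ (he_mem _ hm1) _ hε₀ hem
    have h2 : p (e (n₀+1)) < 1 := lt_of_le_of_lt h1 hpε₀
    have h3 : 0 < f (n₀+1) := by
      have := Real.log_neg (hppos _ hm1) h2
      simp only [hfdef]; linarith
    have h4 := hmemL (n₀+1) hm1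
    have hm' : (0:ℝ) < ((n₀+1:ℕ):ℝ) := by exact_mod_cast Nat.succ_pos n₀
    have : 0 < f (n₀+1) / ((n₀+1:ℕ):ℝ) := div_pos h3 hm'
    linarith
  -- iterated submultiplicativity
  have hpiter : ∀ x ∈ Set.Ioo (0:ℝ) 1, ∀ j : ℕ, 1 ≤ j → p (x^j) ≤ p x ^ j := by
    intro x hx j hj
    induction j, hj using Nat.le_induction with
    | base => simp
    | succ j hj ih =>
      have hxj : x^j ∈ Set.Ioo (0:ℝ) 1 :=
        ⟨pow_pos hx.1 j, pow_lt_one₀ hx.1.le hx.2 (by omega)⟩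
      calc p (x^(j+1)) = p (x^j * x) := by rw [pow_succ]
        _ ≤ p (x^j) * p x := hsub _ hxj _ hx
        _ ≤ p x ^ j * p x := mul_le_mul_of_nonneg_right ih (hrange x hx).1.le
        _ = p x ^ (j+1) := (pow_succ _ _).symm
  have hfiter : ∀ m, 1 ≤ m → ∀ j : ℕ, 1 ≤ j → (j:ℝ) * f m ≤ f (m * j) := by
    intro m hm j hj
    have hmj : 1 ≤ m * j := Nat.one_le_iff_ne_zero.mpr (by positivity)
    have h1 : p ((e m)^j) ≤ p (e m) ^ j := hpiter _ (he_mem m hm) j hj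
    have he' : (e m)^j = e (m*j) := by simp only [hedef]; rw [← pow_mul]
    rw [he'] at h1
    have h2 : Real.log (p (e (m*j))) ≤ Real.log (p (e m) ^ j) :=
      (Real.log_le_log_iff (hppos _ hmj) (pow_pos (hppos m hm) j)).mpr h1
    rw [Real.log_pow] at h2
    simp only [hfdef]
    push_cast at h2 ⊢
    nlinarith [h2]
  -- lower linear bound: L * n ≤ f (n+3) + A
  have hLg : ∀ n : ℕ, 1 ≤ n → L * n ≤ f (n+3) + A := by
    intro n hn
    have hn0 : (0:ℝ) < (n:ℝ) := by exact_mod_cast Nat.lt_of_lt_of_le Nat.zero_lt_one hn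
    set G : ℝ := f (n+3) + A with hGdef
    have hG0 : 0 ≤ G := add_nonneg (hf0 _ (by omega)) hA
    have key : ∀ m, 1 ≤ m → (n:ℝ) * f m ≤ (m:ℝ) * G := by
      intro m hm
      apply arch_aux8 (c := (n:ℝ) * G)
      intro j hj
      set k : ℕ := m * j / n + 1 with hkdef
      have hk1 : 1 ≤ k := Nat.le_add_left 1 _
      have hmjk : m * j ≤ k * n := by
        have hdm := Nat.div_add_mod (m*j) n
        have hmod : (m*j) % n < n := Nat.mod_lt _ (by omega)
        calc m * j = n*(m*j/n) + (m*j)%n := hdm.symm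
          _ ≤ n*(m*j/n) + n := Nat.add_le_add_left (le_of_lt hmod) _
          _ = k * n := by rw [hkdef, add_mul, one_mul, mul_comm]
      have hknle : k * n ≤ m * j + n := by
        have h := Nat.div_mul_le_self (m*j) n
        calc k * n = m*j/n*n + n := by rw [hkdef, add_mul, one_mul]
          _ ≤ m * j + n := Nat.add_le_add_right h _
      have hmj : 1 ≤ m * j := Nat.one_le_iff_ne_zero.mpr (by positivity)
      have h1 : (j:ℝ) * f m ≤ f (m*j) := hfiter m hm j hj
      have h2 : f (m*j) ≤ f (k*n+3) := hfmono _ _ hmj (by omega)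
      have h3 : f (k*n+3) ≤ (k:ℝ) * G - A := hgK n hn k hk1
      have h4 : (k:ℝ) * (n:ℝ) ≤ (m:ℝ) * (j:ℝ) + (n:ℝ) := by exact_mod_cast hknle
      have h5 : (j:ℝ) * f m ≤ (k:ℝ) * G := by linarith
      have h6 : (n:ℝ) * ((j:ℝ) * f m) ≤ (n:ℝ) * ((k:ℝ) * G) :=
        mul_le_mul_of_nonneg_left h5 hn0.le
      have h7 : ((k:ℝ) * (n:ℝ)) * G ≤ ((m:ℝ) * (j:ℝ) + (n:ℝ)) * G :=
        mul_le_mul_of_nonneg_right h4 hG0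
      nlinarith
    have hub : L ≤ G / n := by
      apply csSup_le hSne
      rintro x ⟨m, hm, rfl⟩
      have hm0 : (0:ℝ) < (m:ℝ) := by exact_mod_cast Nat.lt_of_lt_of_le Nat.zero_lt_one hm
      rw [div_le_div_iff₀ hm0 hn0]
      have := key m hm
      nlinarith
    have := mul_le_mul_of_nonneg_right hub hn0.le
    calc L * n ≤ (G / n) * n := this
      _ = G := by field_simp
  -- conclude
  have hlog2 : (0:ℝ) < Real.log 2 := Real.log_pos one_lt_two
  set β : ℝ := L / Real.log 2 with hβdef
  have hβpos : 0 < β := div_pos hLpos hlog2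
  refine ⟨β, hβpos, Real.exp (4*L + A), Real.exp_pos _, ?_⟩
  intro ε hε
  have hε1 : ε ∈ Set.Ioo (0:ℝ) 1 := ⟨hε.1, lt_trans hε.2 (by norm_num)⟩
  have hpε := hrange ε hε1
  set t : ℝ := -Real.log ε with htdef
  have ht : 3 * Real.log 2 < t := by
    have h1 : Real.log ε < Real.log (1/8) := Real.log_lt_log hε.1 hε.2
    have h2 : Real.log (1/8 : ℝ) = -(3 * Real.log 2) := by
      rw [show (1/8:ℝ) = ((2:ℝ)^3)⁻¹ by norm_num, Real.log_inv, Real.log_pow]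
      push_cast; ring
    simp only [htdef]; linarith
  have ht0 : 0 < t := lt_trans (by positivity) ht
  have hεβ : ε ^ β = Real.exp (-(β * t)) := by
    rw [Real.rpow_def_of_pos hε.1]
    congr 1
    simp only [htdef]; ring
  have heq : ∀ n : ℕ, Real.log (e n) = -((n:ℝ) * Real.log 2) := by
    intro n
    simp only [hedef]
    rw [Real.log_pow, show Real.log (1/2:ℝ) = -Real.log 2 by
      rw [one_div, Real.log_inv]]
    ring
  constructor
  · -- lower bound: ε^β ≤ p ε
    have hFt : -Real.log (p ε) ≤ β * t := by
      apply arch_aux8 (c := L)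
      intro j hj
      set m : ℕ := ⌊(j:ℝ) * t / Real.log 2⌋₊ + 1 with hmdef
      have hm1 : 1 ≤ m := Nat.le_add_left 1 _
      have hjt0 : 0 ≤ (j:ℝ) * t / Real.log 2 := by positivity
      have hmgt : (j:ℝ) * t / Real.log 2 < (m:ℝ) := by
        simp only [hmdef]; push_cast
        exact Nat.lt_floor_add_one _
      have hmle : (m:ℝ) ≤ (j:ℝ) * t / Real.log 2 + 1 := by
        simp only [hmdef]; push_cast
        linarith [Nat.floor_le hjt0]
      have hem : e m ≤ ε ^ j := by
        have key : (j:ℝ) * t < (m:ℝ) * Real.log 2 := by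
          rw [div_lt_iff₀ hlog2] at hmgt; linarith
        have h1 : Real.log (e m) ≤ Real.log (ε^j) := by
          rw [heq, Real.log_pow]
          simp only [htdef] at key
          linarith
        exact (Real.log_le_log_iff (he_pos m) (pow_pos hε.1 j)).mp h1
      have hεj : ε^j ∈ Set.Ioo (0:ℝ) 1 :=
        ⟨pow_pos hε.1 j, pow_lt_one₀ hε1.1.le hε1.2 (by omega)⟩
      have h1 : p (e m) ≤ p (ε^j) := hmono _ (he_mem m hm1) _ hεj hem
      have h2 : p (ε^j) ≤ p ε ^ j := hpiter ε hε1 j hj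
      have h3 : p (e m) ≤ p ε ^ j := le_trans h1 h2
      have h4 : Real.log (p (e m)) ≤ (j:ℝ) * Real.log (p ε) := by
        rw [← Real.log_pow]
        exact (Real.log_le_log_iff (hppos m hm1) (pow_pos hpε.1 j)).mpr h3
      have h5 : f m ≤ L * m := hfLn m hm1
      have h6 : L * (m:ℝ) ≤ L * ((j:ℝ) * t / Real.log 2 + 1) :=
        mul_le_mul_of_nonneg_left hmle hLpos.le
      have h7 : L * ((j:ℝ) * t / Real.log 2 + 1) = (j:ℝ) * (β * t) + L := by
        simp only [hβdef]; field_simp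
      have h8 : (j:ℝ) * (-Real.log (p ε)) ≤ f m := by
        simp only [hfdef]; linarith
      exact le_trans h8 (le_trans h5 (le_trans h6 (le_of_eq h7)))
    rw [hεβ]
    have h9 : Real.exp (-(β*t)) ≤ Real.exp (Real.log (p ε)) :=
      Real.exp_le_exp.mpr (by linarith)
    rwa [Real.exp_log hpε.1] at h9
  · -- upper bound: p ε ≤ exp(4L+A) * ε^β
    set n : ℕ := ⌊t / Real.log 2⌋₊ with hndef
    have htlog : 3 < t / Real.log 2 := by rw [lt_div_iff₀ hlog2]; linarith
    have hn3 : 3 ≤ n := Nat.le_floor (by push_cast; linarith)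
    have hn1 : 1 ≤ n := by omega
    have hnle : (n:ℝ) ≤ t / Real.log 2 := Nat.floor_le (by positivity)
    have hngt : t / Real.log 2 < (n:ℝ) + 1 := Nat.lt_floor_add_one _
    have hεen : ε ≤ e n := by
      have key : (n:ℝ) * Real.log 2 ≤ t := by
        have h1 := mul_le_mul_of_nonneg_right hnle hlog2.le
        have h2 : t / Real.log 2 * Real.log 2 = t := div_mul_cancel₀ t hlog2.ne'
        linarith
      have h1 : Real.log ε ≤ Real.log (e n) := by
        rw [heq]
        simp only [htdef] at key
        linarith
      exact (Real.log_le_log_iff hε.1 (he_pos n)).mp h1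
    have h1 : p ε ≤ p (e n) := hmono _ hε1 _ (he_mem n hn1) hεen
    have h2 : L * ((n:ℝ) - 3) - A ≤ f n := by
      rcases eq_or_lt_of_le hn3 with h | h
      · have hfn : 0 ≤ f 3 := hf0 3 (by omega)
        rw [← h]
        push_cast
        linarith
      · have h4 : 4 ≤ n := h
        have h5 := hLg (n-3) (by omega)
        rw [show n - 3 + 3 = n from by omega] at h5
        have hc : ((n-3:ℕ):ℝ) = (n:ℝ) - 3 := by
          push_cast [Nat.cast_sub (show 3 ≤ n by omega)]; ring
        rw [hc] at h5
        linarith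
    have h3 : β * t - (4*L + A) ≤ f n := by
      have h6 : t / Real.log 2 - 1 < (n:ℝ) := by linarith
      have h7 : L * (t/Real.log 2 - 4) ≤ L * ((n:ℝ) - 3) :=
        mul_le_mul_of_nonneg_left (by linarith) hLpos.le
      have h8 : L * (t / Real.log 2) = β * t := by
        simp only [hβdef]; ring
      nlinarith
    have h9 : p (e n) ≤ Real.exp (4*L + A) * Real.exp (-(β*t)) := by
      have h10 : p (e n) = Real.exp (Real.log (p (e n))) :=
        (Real.exp_log (hppos n hn1)).symm
      rw [h10, ← Real.exp_add]
      apply Real.exp_le_exp.mpr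
      simp only [hfdef] at h3
      linarith
    rw [hεβ]
    calc p ε ≤ p (e n) := h1
      _ ≤ Real.exp (4*L+A) * Real.exp (-(β*t)) := h9
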